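/- arXiv:1602.08359 — 8 statements merged into one kernel-verified Lean document; each statement's English description precedes it below -/
import Mathlib

section
/- Let S = U ⊕ N_8 be the even hyperbolic lattice of rank 10 with basis c1, c2 of U ((c1,c1) = (c2,c2) = 0, (c1,c2) = -1) and N_8 the lattice generated by e1,...,e8 with (e_i,e_j) = 2δ_ij together with the vector (e1 + ... + e8)/2, the two summands being orthogonal. Let P consist of the 18 vectors e1,...,e8, c1 - e1, ..., c1 - e8, f = -c1 + c2, and f' = c1 + c2 - (e1 + ... + e8)/2. Then every element of P lies in S and has square 2, and the vector ρ = 3c1 + 2c2 - (e1 + ... + e8)/2 ∈ S satisfies (ρ, δ) = -1 for every δ ∈ P. -/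
/-- The bilinear form of `S = U ⊕ N₈` on `ℚ^10`, in the coordinates `(c1, c2, e1, …, e8)`
where `(c1,c1) = (c2,c2) = 0`, `(c1,c2) = -1` and `(e_i,e_j) = 2δ_ij`. -/
def B2 (x y : Fin 10 → ℚ) : ℚ :=
  -(x 0 * y 1 + x 1 * y 0) + 2 * ∑ i : Fin 8, x i.succ.succ * y i.succ.succ

/-- Membership in the lattice `S = U ⊕ N₈ ⊂ ℚ^10`: integral `c`-coordinates, and the
`e`-coordinates all integral or all half-integral (since `N₈ = ℤ^8 + ℤ·(e1+…+e8)/2`). -/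
def inS2 (x : Fin 10 → ℚ) : Prop :=
  (∃ a : ℤ, x 0 = a) ∧ (∃ a : ℤ, x 1 = a) ∧
    ((∀ i : Fin 8, ∃ k : ℤ, x i.succ.succ = k) ∨
      (∀ i : Fin 8, ∃ k : ℤ, x i.succ.succ = k + 1/2))

def c1v : Fin 10 → ℚ := fun j => if j = 0 then 1 else 0
def c2v : Fin 10 → ℚ := fun j => if j = 1 then 1 else 0
def Ev (i : Fin 8) : Fin 10 → ℚ := fun j => if j = i.succ.succ then 1 else 0
/-- `h = (e1 + … + e8)/2`. -/
def hv2 : Fin 10 → ℚ := fun j => if j = 0 ∨ j = 1 then 0 else 1/2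

/-- The set `P` of 18 vectors: `e1, …, e8`, `c1 - e1, …, c1 - e8`, `f = -c1 + c2`,
and `f' = c1 + c2 - (e1 + … + e8)/2`. -/
def PS2 : Set (Fin 10 → ℚ) :=
  Set.range Ev ∪ Set.range (fun i => c1v - Ev i) ∪ {-c1v + c2v, c1v + c2v - hv2}

/-- `ρ = 3c1 + 2c2 - (e1 + … + e8)/2`. -/
def rho2 : Fin 10 → ℚ := fun j => if j = 0 then 3 else if j = 1 then 2 else -(1/2)

/-!
`S` is an additive subgroup of `ℚ^10`, so membership of the eighteen roots and of
`ρ = 3c1 + 2c2 - h` follows from `c1, c2, e_i, h ∈ S`. The pairings are read off coordinatewise: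
the `e`-part of each sum either collapses to a single term or consists of eight equal terms.
-/

section Coordinates

variable (i j : Fin 8)

@[simp] lemma c1v_zero : c1v 0 = 1 := rfl
@[simp] lemma c1v_one : c1v 1 = 0 := rfl
@[simp] lemma c1v_succ_succ : c1v j.succ.succ = 0 := if_neg (Fin.succ_ne_zero _)

@[simp] lemma c2v_zero : c2v 0 = 0 := rfl
@[simp] lemma c2v_one : c2v 1 = 1 := rfl
@[simp] lemma c2v_succ_succ : c2v j.succ.succ = 0 := if_neg (Fin.succ_succ_ne_one _)

@[simp] lemma Ev_zero : Ev i 0 = 0 := if_neg (Fin.succ_ne_zero _).symm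
@[simp] lemma Ev_one : Ev i 1 = 0 := if_neg (Fin.succ_succ_ne_one _).symm
@[simp] lemma Ev_succ_succ : Ev i j.succ.succ = if j = i then 1 else 0 := by
  simp only [Ev, Fin.succ_inj]

@[simp] lemma hv2_zero : hv2 0 = 0 := rfl
@[simp] lemma hv2_one : hv2 1 = 0 := rfl
@[simp] lemma hv2_succ_succ : hv2 j.succ.succ = 1 / 2 :=
  if_neg (not_or_intro (Fin.succ_ne_zero _) (Fin.succ_succ_ne_one _))

@[simp] lemma rho2_zero : rho2 0 = 3 := rfl
@[simp] lemma rho2_one : rho2 1 = 2 := rfl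
@[simp] lemma rho2_succ_succ : rho2 j.succ.succ = -(1 / 2) := by
  rw [rho2, if_neg (Fin.succ_ne_zero _), if_neg (Fin.succ_succ_ne_one _)]

end Coordinates

lemma rho2_eq : rho2 = 3 • c1v + 2 • c2v - hv2 := by
  funext j
  fin_cases j <;> norm_num [rho2, c1v, c2v, hv2]

def latticeS : AddSubgroup (Fin 10 → ℚ) where
  carrier := {x | inS2 x}
  zero_mem' := ⟨⟨0, by simp⟩, ⟨0, by simp⟩, Or.inl fun _ => ⟨0, by simp⟩⟩
  add_mem' := by
    rintro x y ⟨⟨a, ha⟩, ⟨b, hb⟩, hx⟩ ⟨⟨a', ha'⟩, ⟨b', hb'⟩, hy⟩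
    refine ⟨⟨a + a', by simp [ha, ha']⟩, ⟨b + b', by simp [hb, hb']⟩, ?_⟩
    rcases hx with hx | hx <;> rcases hy with hy | hy
    · exact Or.inl fun i => have ⟨k, hk⟩ := hx i; have ⟨l, hl⟩ := hy i
        ⟨k + l, by simp [hk, hl]⟩
    · exact Or.inr fun i => have ⟨k, hk⟩ := hx i; have ⟨l, hl⟩ := hy i
        ⟨k + l, by simp [hk, hl]; ring⟩
    · exact Or.inr fun i => have ⟨k, hk⟩ := hx i; have ⟨l, hl⟩ := hy i
        ⟨k + l, by simp [hk, hl]; ring⟩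
    -- two half-integral `e`-parts add up to an integral one
    · exact Or.inl fun i => have ⟨k, hk⟩ := hx i; have ⟨l, hl⟩ := hy i
        ⟨k + l + 1, by simp [hk, hl]; ring⟩
  neg_mem' := by
    rintro x ⟨⟨a, ha⟩, ⟨b, hb⟩, hx⟩
    refine ⟨⟨-a, by simp [ha]⟩, ⟨-b, by simp [hb]⟩, 
      hx.imp (fun h i => ?_) (fun h i => ?_)⟩
    · obtain ⟨k, hk⟩ := h i
      exact ⟨-k, by simp [hk]⟩
    · obtain ⟨k, hk⟩ := h i
      exact ⟨-k - 1, by simp [hk]; ring⟩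

lemma mem_latticeS {x : Fin 10 → ℚ} : x ∈ latticeS ↔ inS2 x := Iff.rfl

lemma c1v_mem_latticeS : c1v ∈ latticeS :=
  ⟨⟨1, by simp⟩, ⟨0, by simp⟩, Or.inl fun _ => ⟨0, by simp⟩⟩

lemma c2v_mem_latticeS : c2v ∈ latticeS :=
  ⟨⟨0, by simp⟩, ⟨1, by simp⟩, Or.inl fun _ => ⟨0, by simp⟩⟩

lemma hv2_mem_latticeS : hv2 ∈ latticeS :=
  ⟨⟨0, by simp⟩, ⟨0, by simp⟩, Or.inr fun _ => ⟨0, by simp⟩⟩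

lemma Ev_mem_latticeS (i : Fin 8) : Ev i ∈ latticeS :=
  ⟨⟨0, by simp⟩, ⟨0, by simp⟩, Or.inl fun j =>
    ⟨if j = i then 1 else 0, by split_ifs <;> simp [*]⟩⟩

lemma rho2_mem_latticeS : rho2 ∈ latticeS := by
  rw [rho2_eq]
  exact sub_mem (add_mem (nsmul_mem c1v_mem_latticeS 3) (nsmul_mem c2v_mem_latticeS 2))
    hv2_mem_latticeS

lemma B2_Ev_self (i : Fin 8) : B2 (Ev i) (Ev i) = 2 := by norm_num [B2]
lemma B2_c1v_sub_Ev_self (i : Fin 8) : B2 (c1v - Ev i) (c1v - Ev i) = 2 := by norm_num [B2]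
lemma B2_neg_c1v_add_c2v_self : B2 (-c1v + c2v) (-c1v + c2v) = 2 := by norm_num [B2]
lemma B2_c1v_add_c2v_sub_hv2_self : B2 (c1v + c2v - hv2) (c1v + c2v - hv2) = 2 := by
  norm_num [B2]
lemma B2_rho2_Ev (i : Fin 8) : B2 rho2 (Ev i) = -1 := by norm_num [B2]
lemma B2_rho2_c1v_sub_Ev (i : Fin 8) : B2 rho2 (c1v - Ev i) = -1 := by norm_num [B2]
lemma B2_rho2_neg_c1v_add_c2v : B2 rho2 (-c1v + c2v) = -1 := by norm_num [B2]
lemma B2_rho2_c1v_add_c2v_sub_hv2 : B2 rho2 (c1v + c2v - hv2) = -1 := by norm_num [B2]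

lemma forall_mem_PS2 {p : (Fin 10 → ℚ) → Prop} :
    (∀ δ ∈ PS2, p δ) ↔ (∀ i, p (Ev i)) ∧ (∀ i, p (c1v - Ev i)) ∧ p (-c1v + c2v) ∧
      p (c1v + c2v - hv2) := by
  simp only [PS2, Set.mem_union, Set.mem_insert_iff, Set.mem_singleton_iff, Set.mem_range,
    or_imp, forall_and, forall_exists_index, forall_apply_eq_imp_iff, forall_eq]
  tauto

theorem stmt2 :
    (∀ δ ∈ PS2, inS2 δ ∧ B2 δ δ = 2) ∧
    inS2 rho2 ∧ (∀ δ ∈ PS2, B2 rho2 δ = -1) := by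
  have hc1 := c1v_mem_latticeS
  have hc2 := c2v_mem_latticeS
  refine ⟨forall_mem_PS2.2 ⟨?_, ?_, ?_, ?_⟩, mem_latticeS.1 rho2_mem_latticeS,
    forall_mem_PS2.2 ⟨B2_rho2_Ev, B2_rho2_c1v_sub_Ev, B2_rho2_neg_c1v_add_c2v,
      B2_rho2_c1v_add_c2v_sub_hv2⟩⟩
  · exact fun i => ⟨Ev_mem_latticeS i, B2_Ev_self i⟩
  · exact fun i => ⟨sub_mem hc1 (Ev_mem_latticeS i), B2_c1v_sub_Ev_self i⟩
  · exact ⟨add_mem (neg_mem hc1) hc2, B2_neg_c1v_add_c2v_self⟩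
  · exact ⟨sub_mem (add_mem hc1 hc2) hv2_mem_latticeS, B2_c1v_add_c2v_sub_hv2_self⟩
end

section
/- Let S = U(3) ⊕ 2A_1 be the even hyperbolic lattice of rank 4 with basis c1, c2, e1, e2 where (c1,c1) = (c2,c2) = 0, (c1,c2) = -3, (e_i,e_j) = 2δ_ij, and the two summands are orthogonal. Let P = {e1, e2, c1 - e1, c1 - e2, c2 - e1, c2 - e2, 2c1 + 2c2 - 3e1 - 2e2, 2c1 + 2c2 - 2e1 - 3e2}. Then every element of P has square 2, but there exists no vector ρ ∈ S ⊗ ℚ with (ρ, δ) = -1 for every δ ∈ P. -/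
/-- The bilinear form on `ℚ^n` given by a Gram matrix `G`. -/
def bil {n : ℕ} (G : Matrix (Fin n) (Fin n) ℚ) (x y : Fin n → ℚ) : ℚ :=
  ∑ i, ∑ j, x i * G i j * y j

/-- Gram matrix of `S = U(3) ⊕ 2A₁` in the basis `c1, c2, e1, e2`. -/
def G4 : Matrix (Fin 4) (Fin 4) ℚ := !![0, -3, 0, 0; -3, 0, 0, 0; 0, 0, 2, 0; 0, 0, 0, 2]

/-- `P = (e1, e2, c1-e1, c1-e2, c2-e1, c2-e2, 2c1+2c2-3e1-2e2, 2c1+2c2-2e1-3e2)`. -/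
def P4 : Fin 8 → (Fin 4 → ℚ) :=
  ![![0, 0, 1, 0], ![0, 0, 0, 1], ![1, 0, -1, 0], ![1, 0, 0, -1],
    ![0, 1, -1, 0], ![0, 1, 0, -1], ![2, 2, -3, -2], ![2, 2, -2, -3]]

/-! Writing `δ₁, …, δ₈` for the vectors of `P` in order,
`δ₇ = δ₁ - 2δ₂ + 2δ₃ + 2δ₅`. A vector `ρ` with `(ρ, δᵢ) = -1` for every `i` would therefore
satisfy `-1 = (ρ, δ₇) = -(1 - 2 + 2 + 2) = -3`. -/

theorem bil_eq_toLinearMap₂' {n : ℕ} (G : Matrix (Fin n) (Fin n) ℚ) (x y : Fin n → ℚ) :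
    bil G x y = Matrix.toLinearMap₂' ℚ G x y := by
  simp only [bil, Matrix.toLinearMap₂'_apply, smul_eq_mul]
  exact Finset.sum_congr rfl fun _ _ => Finset.sum_congr rfl fun _ _ => by ring

theorem bil_sum_smul {n : ℕ} {ι : Type*} (G : Matrix (Fin n) (Fin n) ℚ) (x : Fin n → ℚ)
    (s : Finset ι) (c : ι → ℚ) (w : ι → Fin n → ℚ) :
    bil G x (∑ i ∈ s, c i • w i) = ∑ i ∈ s, c i * bil G x (w i) := by
  simp only [bil_eq_toLinearMap₂', map_sum, map_smul, smul_eq_mul]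

theorem not_exists_bil_eq_neg_one_of_relation {n : ℕ} {ι : Type*} [Fintype ι]
    (G : Matrix (Fin n) (Fin n) ℚ) (P : ι → Fin n → ℚ) (c : ι → ℚ) (j : ι)
    (hrel : P j = ∑ i, c i • P i) (hc : ∑ i, c i ≠ 1) :
    ¬ ∃ ρ : Fin n → ℚ, ∀ i, bil G ρ (P i) = -1 := by
  rintro ⟨ρ, hρ⟩
  have h := hρ j
  rw [hrel, bil_sum_smul] at h
  simp only [hρ, mul_neg, mul_one, Finset.sum_neg_distrib, neg_inj] at h
  exact hc h

theorem bil_G4 (x y : Fin 4 → ℚ) :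
    bil G4 x y = -3 * (x 0 * y 1 + x 1 * y 0) + 2 * (x 2 * y 2 + x 3 * y 3) := by
  simp only [bil, G4, Fin.sum_univ_four, Matrix.of_apply, Matrix.cons_val', Matrix.cons_val,
    Matrix.empty_val', Matrix.cons_val_fin_one]
  ring

theorem P4_six_eq_sum : P4 6 = ∑ i, ![1, -2, 2, 0, 2, 0, 0, 0] i • P4 i := by
  ext k
  fin_cases k <;> simp [P4, Fin.sum_univ_succ]
  norm_num

theorem stmt4 :
    (∀ i, bil G4 (P4 i) (P4 i) = 2) ∧
    ¬ ∃ ρ : Fin 4 → ℚ, ∀ i, bil G4 ρ (P4 i) = -1 := by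
  refine ⟨fun i => ?_, not_exists_bil_eq_neg_one_of_relation G4 P4 _ 6 P4_six_eq_sum ?_⟩
  · fin_cases i <;> simp [bil_G4, P4] <;> norm_num
  · norm_num [Fin.sum_univ_succ]
end

section
/- For every integer k ≥ 1, the lattices ⟨-2⟩ ⊕ (k+1)⟨2⟩ and U(2) ⊕ k⟨2⟩ are isometric. -/
/-!
Both lattices contain `(k-1)⟨2⟩` as an orthogonal summand, so it suffices to show
`⟨-2⟩ ⊕ 2⟨2⟩ ≅ U(2) ⊕ ⟨2⟩`. In the orthogonal basis `e₀, e₁, e₂` of the former, the vectors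
`e₀ + e₁` and `e₀ + e₂` are isotropic with product `-2`, while `e₀ + e₁ + e₂` has square `2` and
is orthogonal to both; this change of basis has determinant `-1`.
-/

/-- Gram matrix of `⟨-2⟩ ⊕ (k+1)⟨2⟩`. -/
def G8a (k : ℕ) : Matrix (Fin (k+2)) (Fin (k+2)) ℤ :=
  Matrix.of fun i j => if i = j then (if (i : ℕ) = 0 then -2 else 2) else 0

/-- Gram matrix of `U(2) ⊕ k⟨2⟩`. -/
def G8b (k : ℕ) : Matrix (Fin (k+2)) (Fin (k+2)) ℤ :=
  Matrix.of fun i j =>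
    if ((i : ℕ) = 0 ∧ (j : ℕ) = 1) ∨ ((i : ℕ) = 1 ∧ (j : ℕ) = 0) then -2
    else if i = j ∧ 2 ≤ (i : ℕ) then 2 else 0

namespace Matrix

variable {R : Type*} [CommRing R] {m n : Type*} [Fintype m] [DecidableEq m]
  [Fintype n] [DecidableEq n]

def IsCongruent (A C : Matrix n n R) : Prop :=
  ∃ P : Matrix n n R, IsUnit P.det ∧ Pᵀ * A * P = C

theorem IsCongruent.fromBlocks {A C : Matrix m m R} (h : IsCongruent A C) (D : Matrix n n R) :
    IsCongruent (fromBlocks A 0 0 D) (fromBlocks C 0 0 D) := by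
  obtain ⟨P, hP, rfl⟩ := h
  refine ⟨Matrix.fromBlocks P 0 0 1, ?_, ?_⟩
  · simpa [det_fromBlocks_zero₁₂] using hP
  · simp [fromBlocks_transpose, fromBlocks_multiply]

theorem IsCongruent.of_submatrix {A C : Matrix n n R} (e : m ≃ n)
    (h : IsCongruent (A.submatrix e e) (C.submatrix e e)) : IsCongruent A C := by
  obtain ⟨P, hP, hPAC⟩ := h
  refine ⟨P.submatrix e.symm e.symm, by rwa [det_submatrix_equiv_self], ?_⟩
  have hA : A = (A.submatrix e e).submatrix e.symm e.symm := by simp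
  rw [hA, transpose_submatrix, submatrix_mul_equiv, submatrix_mul_equiv, hPAC]
  simp

end Matrix

open Matrix

theorem isCongruent_diag_neg_two_two_two :
    IsCongruent (!![-2, 0, 0; 0, 2, 0; 0, 0, 2] : Matrix (Fin 3) (Fin 3) ℤ)
      !![0, -2, 0; -2, 0, 0; 0, 0, 2] :=
  ⟨!![1, 1, 1; 1, 0, 1; 0, 1, 1], by simp [det_fin_three], by decide⟩

def finThreeSumEquiv (m : ℕ) : Fin 3 ⊕ Fin m ≃ Fin (m + 1 + 2) :=
  finSumFinEquiv.trans (finCongr (by omega))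

@[simp] theorem finThreeSumEquiv_inl_val (m : ℕ) (a : Fin 3) :
    (finThreeSumEquiv m (.inl a) : ℕ) = a := by
  simp [finThreeSumEquiv]

@[simp] theorem finThreeSumEquiv_inr_val (m : ℕ) (b : Fin m) :
    (finThreeSumEquiv m (.inr b) : ℕ) = 3 + b := by
  simp [finThreeSumEquiv]; omega

theorem G8a_submatrix (m : ℕ) :
    (G8a (m + 1)).submatrix (finThreeSumEquiv m) (finThreeSumEquiv m) =
      fromBlocks !![-2, 0, 0; 0, 2, 0; 0, 0, 2] 0 0 (diagonal fun _ => 2) := by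
  ext (a | a) (b | b)
  · fin_cases a <;> fin_cases b <;> simp [G8a, Fin.ext_iff, -Fin.val_eq_zero_iff]
  · simp [G8a, Fin.ext_iff, -Fin.val_eq_zero_iff]; omega
  · simp [G8a, Fin.ext_iff, -Fin.val_eq_zero_iff]; omega
  · simp [G8a, Fin.ext_iff, -Fin.val_eq_zero_iff, diagonal_apply]

theorem G8b_submatrix (m : ℕ) :
    (G8b (m + 1)).submatrix (finThreeSumEquiv m) (finThreeSumEquiv m) =
      fromBlocks !![0, -2, 0; -2, 0, 0; 0, 0, 2] 0 0 (diagonal fun _ => 2) := by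
  ext (a | a) (b | b)
  · fin_cases a <;> fin_cases b <;> simp [G8b, Fin.ext_iff, -Fin.val_eq_zero_iff]
  · simp [G8b, Fin.ext_iff, -Fin.val_eq_zero_iff]; omega
  · simp [G8b, Fin.ext_iff, -Fin.val_eq_zero_iff]; omega
  · simp [G8b, Fin.ext_iff, -Fin.val_eq_zero_iff, diagonal_apply, (by omega : 2 ≤ 3 + (a : ℕ))]

/-- For every `k ≥ 1` the lattices `⟨-2⟩ ⊕ (k+1)⟨2⟩` and `U(2) ⊕ k⟨2⟩` are isometric. -/
theorem stmt8 (k : ℕ) (hk : 1 ≤ k) :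
    ∃ P : Matrix (Fin (k+2)) (Fin (k+2)) ℤ, IsUnit P.det ∧
      P.transpose * G8a k * P = G8b k := by
  obtain ⟨m, rfl⟩ : ∃ m, k = m + 1 := ⟨k - 1, by omega⟩
  refine IsCongruent.of_submatrix (finThreeSumEquiv m) ?_
  rw [G8a_submatrix, G8b_submatrix]
  exact isCongruent_diag_neg_two_two_two.fromBlocks _
end

section
/- Let 1 ≤ k ≤ 8 with k ≠ 4, let ⟨1⟩^k denote the odd unimodular positive definite lattice ℤ^k with the standard Euclidean form, and let D_k = {x ∈ ℤ^k : x_1 + ... + x_k is even} be its maximal even sublattice. Then every isometry of the lattice U ⊕ D_k extends (via its unique ℚ-linear extension to the rational span) to an isometry of U ⊕ ⟨1⟩^k; consequently the natural restriction homomorphism O(U ⊕ ⟨1⟩^k) → O(U ⊕ D_k) is an isomorphism of groups. -/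
/-- The bilinear form of `U ⊕ ⟨1⟩^k` on `ℚ^(k+2)`, in the coordinates `(c1, c2, x1, …, xk)`. -/
def B9 (k : ℕ) (x y : Fin (k+2) → ℚ) : ℚ :=
  -(x 0 * y 1 + x 1 * y 0) + ∑ i : Fin k, x i.succ.succ * y i.succ.succ

/-- The lattice `U ⊕ ⟨1⟩^k = ℤ^(k+2) ⊂ ℚ^(k+2)`. -/
def L1 (k : ℕ) : Set (Fin (k+2) → ℚ) := {x | ∀ i, ∃ m : ℤ, x i = m}

/-- The lattice `U ⊕ D_k ⊂ ℚ^(k+2)`: integral vectors whose last `k` coordinates have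
even sum. -/
def L2 (k : ℕ) : Set (Fin (k+2) → ℚ) :=
  {x | (∀ i, ∃ m : ℤ, x i = m) ∧ ∃ m : ℤ, ∑ i : Fin k, x i.succ.succ = 2 * m}

/-!
`U ⊕ D_k` is the even part of `U ⊕ ⟨1⟩^k`, so an isometry preserving the odd lattice preserves
the even one. Conversely, every vector of `U ⊕ ⟨1⟩^k` outside `U ⊕ D_k` lies in the set
`oddHalfDual k` of vectors `x` with `2x ∈ U ⊕ D_k`, `x` integral against `U ⊕ D_k` and `x · x`
odd, a set defined by `U ⊕ D_k` and the form alone and hence preserved by every isometry of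
`U ⊕ D_k`. Pairing with `e₀`, `e₁` and `eᵢ + eⱼ` shows that a non-integral element of this set
has all of its last `k` coordinates in `½ + ℤ`; its norm is then `k / 4` modulo `2`, which is an
odd integer only when `k ≡ 4 mod 8`.
-/

open Finset

namespace Int

theorem mul_self_modEq_two (a : ℤ) : a * a ≡ a [ZMOD 2] := by
  rw [Int.modEq_iff_dvd, ← even_iff_two_dvd, show a - a * a = -(a * (a - 1)) by ring, even_neg]
  exact Int.even_mul_pred_self a

theorem mul_self_modEq_one_of_odd {a : ℤ} (ha : Odd a) : a * a ≡ 1 [ZMOD 8] := by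
  obtain ⟨b, rfl⟩ := ha
  obtain ⟨c, hc⟩ := Int.even_mul_succ_self b
  exact (Int.modEq_iff_dvd.mpr ⟨c, by linear_combination 4 * hc⟩).symm

variable {ι : Type*} (s : Finset ι) (n : ι → ℤ)

theorem sum_mul_self_modEq_sum : ∑ i ∈ s, n i * n i ≡ ∑ i ∈ s, n i [ZMOD 2] :=
  Int.ModEq.sum fun i _ => mul_self_modEq_two (n i)

theorem sum_mul_self_modEq_card_of_odd (hn : ∀ i ∈ s, Odd (n i)) :
    ∑ i ∈ s, n i * n i ≡ #s [ZMOD 8] := by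
  simpa using Int.ModEq.sum fun i hi => mul_self_modEq_one_of_odd (hn i hi)

end Int

theorem exists_intCast_eq_two_mul_iff (a : ℤ) : (∃ m : ℤ, (a : ℚ) = 2 * m) ↔ Even a := by
  simp only [even_iff_exists_two_mul]
  norm_cast

theorem exists_intCast_eq_two_mul_add_one_iff (a : ℤ) :
    (∃ m : ℤ, (a : ℚ) = 2 * m + 1) ↔ Odd a := by
  simp only [Odd]
  norm_cast

theorem single_one_eq_intCast_comp {ι : Type*} [DecidableEq ι] (a : ι) :
    (Pi.single a 1 : ι → ℚ) = fun i => ((Pi.single a 1 : ι → ℤ) i : ℚ) := by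
  ext i
  by_cases h : i = a <;> simp [h]

def B9Int (k : ℕ) (n p : Fin (k+2) → ℤ) : ℤ :=
  -(n 0 * p 1 + n 1 * p 0) + ∑ i : Fin k, n i.succ.succ * p i.succ.succ

section Coordinates

variable {k : ℕ}

theorem mem_L1_iff {x : Fin (k+2) → ℚ} :
    x ∈ L1 k ↔ ∃ n : Fin (k+2) → ℤ, x = fun i => (n i : ℚ) := by
  simp only [L1, Set.mem_ofPred_eq, funext_iff]
  exact Classical.skolem

theorem L2_subset_L1 : L2 k ⊆ L1 k := fun _ hx => hx.1

theorem B9_intCast (n p : Fin (k+2) → ℤ) :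
    B9 k (fun i => (n i : ℚ)) (fun i => (p i : ℚ)) = B9Int k n p := by
  push_cast [B9, B9Int]
  rfl

theorem B9_smul (c : ℚ) (x y : Fin (k+2) → ℚ) : B9 k (c • x) (c • y) = c * c * B9 k x y := by
  simp only [B9, Pi.smul_apply, smul_eq_mul, mul_add, Finset.mul_sum]
  congr 1
  · ring
  · exact sum_congr rfl fun _ _ => by ring

theorem B9Int_self_modEq_two (n : Fin (k+2) → ℤ) :
    B9Int k n n ≡ ∑ i : Fin k, n i.succ.succ [ZMOD 2] := by
  have h := Int.sum_mul_self_modEq_sum univ fun i : Fin k => n i.succ.succ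
  unfold Int.ModEq at h ⊢
  rw [B9Int, show -(n 0 * n 1 + n 1 * n 0) = 2 * -(n 0 * n 1) by ring, add_comm,
    Int.add_mul_emod_self_left]
  exact h

theorem B9Int_self_modEq_card (t : Fin (k+2) → ℤ) (h0 : Even (t 0)) (h1 : Even (t 1))
    (hodd : ∀ i : Fin k, Odd (t i.succ.succ)) : B9Int k t t ≡ k [ZMOD 8] := by
  obtain ⟨a, ha⟩ := h0
  obtain ⟨b, hb⟩ := h1
  have h := Int.sum_mul_self_modEq_card_of_odd univ _ fun i _ => hodd i
  rw [card_univ, Fintype.card_fin] at h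
  unfold Int.ModEq at h ⊢
  rw [B9Int, ha, hb, show -((a + a) * (b + b) + (b + b) * (a + a)) = 8 * -(a * b) by ring,
    add_comm, Int.add_mul_emod_self_left]
  exact h

theorem intCast_mem_L2_iff (n : Fin (k+2) → ℤ) :
    (fun i => (n i : ℚ)) ∈ L2 k ↔ Even (∑ i : Fin k, n i.succ.succ) := by
  rw [← exists_intCast_eq_two_mul_iff]
  push_cast
  exact and_iff_right fun i => ⟨n i, rfl⟩

theorem L2_eq_even_norm : L2 k = {x ∈ L1 k | ∃ m : ℤ, B9 k x x = 2 * m} := by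
  ext x
  by_cases hx : x ∈ L1 k
  · obtain ⟨n, rfl⟩ := mem_L1_iff.1 hx
    have h := B9Int_self_modEq_two n
    unfold Int.ModEq at h
    simp only [Set.mem_ofPred_eq, hx, true_and, intCast_mem_L2_iff, B9_intCast,
      exists_intCast_eq_two_mul_iff, Int.even_iff, h]
  · exact iff_of_false (fun h => hx h.1) (fun h => hx h.1)

theorem single_zero_mem_L2 : Pi.single 0 1 ∈ L2 k := by
  rw [single_one_eq_intCast_comp, intCast_mem_L2_iff]
  simp

theorem single_one_mem_L2 : Pi.single 1 1 ∈ L2 k := by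
  rw [single_one_eq_intCast_comp, intCast_mem_L2_iff]
  simp [Fin.succ_succ_ne_one]

theorem single_add_single_mem_L2 (i j : Fin k) :
    Pi.single i.succ.succ 1 + Pi.single j.succ.succ 1 ∈ L2 k := by
  convert (intCast_mem_L2_iff (Pi.single i.succ.succ 1 + Pi.single j.succ.succ 1)).2 ?_
  · simp [single_one_eq_intCast_comp]
  · simp [Pi.single_apply, sum_add_distrib]

theorem B9_single_zero (x : Fin (k+2) → ℚ) : B9 k x (Pi.single 0 1) = -x 1 := by
  simp [B9]

theorem B9_single_one (x : Fin (k+2) → ℚ) : B9 k x (Pi.single 1 1) = -x 0 := by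
  simp [B9, Fin.succ_succ_ne_one]

theorem B9_single_add_single (x : Fin (k+2) → ℚ) (i j : Fin k) :
    B9 k x (Pi.single i.succ.succ 1 + Pi.single j.succ.succ 1) =
      x i.succ.succ + x j.succ.succ := by
  simp [B9, Pi.single_apply, mul_add, sum_add_distrib, (Fin.succ_succ_ne_one _).symm]

end Coordinates

def oddHalfDual (k : ℕ) : Set (Fin (k+2) → ℚ) :=
  {x | (2 : ℚ) • x ∈ L2 k ∧ (∀ y ∈ L2 k, ∃ m : ℤ, B9 k x y = m) ∧
    ∃ m : ℤ, B9 k x x = 2 * m + 1}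

section OddHalfDual

variable {k : ℕ}

theorem L1_subset_union : L1 k ⊆ L2 k ∪ oddHalfDual k := by
  intro x hx
  obtain ⟨n, rfl⟩ := mem_L1_iff.1 hx
  by_cases heven : Even (∑ i : Fin k, n i.succ.succ)
  · exact Or.inl ((intCast_mem_L2_iff n).2 heven)
  refine Or.inr ⟨?_, fun y hy => ?_, ?_⟩
  · convert (intCast_mem_L2_iff (2 • n)).2 ?_
    · simp
    · simp [← mul_sum]
  · obtain ⟨p, rfl⟩ := mem_L1_iff.1 (L2_subset_L1 hy)
    exact ⟨_, B9_intCast n p⟩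
  · rw [B9_intCast, exists_intCast_eq_two_mul_add_one_iff, ← Int.not_even_iff_odd]
    have h := B9Int_self_modEq_two n
    unfold Int.ModEq at h
    rwa [Int.even_iff, h, ← Int.even_iff]

theorem oddHalfDual_subset_L1 (hk : k % 8 ≠ 4) : oddHalfDual k ⊆ L1 k := by
  rintro x ⟨h2x, hpair, m, hm⟩
  obtain ⟨t, ht⟩ := mem_L1_iff.1 (L2_subset_L1 h2x)
  have hx (i) : x i = t i / 2 := by
    rw [← congrFun ht i]
    simp
  have even_of_int (i) : (∃ c : ℤ, x i = c) → Even (t i) := fun ⟨c, hc⟩ =>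
    ⟨c, by rw [hx] at hc; exact_mod_cast (by linarith : (t i : ℚ) = c + c)⟩
  have h0 : Even (t 0) := by
    obtain ⟨c, hc⟩ := hpair _ single_one_mem_L2
    exact even_of_int 0 ⟨-c, by rw [B9_single_one] at hc; push_cast; linarith⟩
  have h1 : Even (t 1) := by
    obtain ⟨c, hc⟩ := hpair _ single_zero_mem_L2
    exact even_of_int 1 ⟨-c, by rw [B9_single_zero] at hc; push_cast; linarith⟩
  have htail (i j : Fin k) : Even (t i.succ.succ + t j.succ.succ) := by
    obtain ⟨c, hc⟩ := hpair _ (single_add_single_mem_L2 i j)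
    rw [B9_single_add_single, hx, hx] at hc
    exact ⟨c, by exact_mod_cast (by linarith : (t i.succ.succ + t j.succ.succ : ℚ) = c + c)⟩
  by_cases heven : ∀ i : Fin k, Even (t i.succ.succ)
  · have hteven : ∀ i, Even (t i) := Fin.cases h0 (Fin.cases (Fin.succ_zero_eq_one ▸ h1) heven)
    intro i
    obtain ⟨c, hc⟩ := hteven i
    exact ⟨c, by rw [hx, hc]; push_cast; ring⟩
  obtain ⟨i₀, hi₀⟩ := not_forall.1 heven
  have hodd (j : Fin k) : Odd (t j.succ.succ) :=
    Int.not_even_iff_odd.1 fun hj => hi₀ ((Int.even_add.1 (htail i₀ j)).2 hj)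
  have hnorm : B9Int k t t = 8 * m + 4 := by
    have h := B9_smul 2 x x
    rw [ht, B9_intCast, hm] at h
    exact_mod_cast h.trans (by ring : (2 * 2 * (2 * m + 1) : ℚ) = 8 * m + 4)
  have h := B9Int_self_modEq_card t h0 h1 hodd
  rw [hnorm, Int.ModEq] at h
  omega

theorem L1_eq_union (hk : k % 8 ≠ 4) : L1 k = L2 k ∪ oddHalfDual k :=
  L1_subset_union.antisymm (Set.union_subset L2_subset_L1 (oddHalfDual_subset_L1 hk))

theorem preimage_L2_eq_of_preimage_L1_eq {f : (Fin (k+2) → ℚ) → Fin (k+2) → ℚ}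
    (hf : ∀ x, B9 k (f x) (f x) = B9 k x x) (h : f ⁻¹' L1 k = L1 k) : f ⁻¹' L2 k = L2 k := by
  have hL1 (x) : f x ∈ L1 k ↔ x ∈ L1 k := Set.ext_iff.1 h x
  ext x
  rw [L2_eq_even_norm]
  simp only [Set.mem_preimage, Set.mem_ofPred_eq, hf, hL1]

theorem preimage_oddHalfDual_eq (f : (Fin (k+2) → ℚ) ≃ₗ[ℚ] Fin (k+2) → ℚ)
    (hf : ∀ x y, B9 k (f x) (f y) = B9 k x y) (h : f ⁻¹' L2 k = L2 k) :
    f ⁻¹' oddHalfDual k = oddHalfDual k := by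
  have hL2 (x) : f x ∈ L2 k ↔ x ∈ L2 k := Set.ext_iff.1 h x
  ext x
  have hpair : (∀ y ∈ L2 k, ∃ m : ℤ, B9 k (f x) y = m) ↔ ∀ y ∈ L2 k, ∃ m : ℤ, B9 k x y = m := by
    rw [f.surjective.forall]
    simp only [hL2, hf]
  simp only [oddHalfDual, Set.mem_preimage, Set.mem_ofPred_eq, ← map_smul f (2 : ℚ) x, hL2, hf,
    hpair]

end OddHalfDual

theorem stmt9_general (k : ℕ) (hk8 : k ≤ 8) (hk4 : k ≠ 4)
    (f : (Fin (k+2) → ℚ) ≃ₗ[ℚ] (Fin (k+2) → ℚ))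
    (hf : ∀ x y, B9 k (f x) (f y) = B9 k x y) :
    ⇑f '' L2 k = L2 k ↔ ⇑f '' L1 k = L1 k := by
  have image_eq_iff (s : Set (Fin (k+2) → ℚ)) : ⇑f '' s = s ↔ ⇑f ⁻¹' s = s :=
    eq_comm.trans (Set.preimage_eq_iff_eq_image f.bijective).symm
  rw [image_eq_iff, image_eq_iff]
  refine ⟨fun h => ?_, preimage_L2_eq_of_preimage_L1_eq fun x => hf x x⟩
  rw [L1_eq_union (by omega), Set.preimage_union, h, preimage_oddHalfDual_eq f hf h]

/-- For `1 ≤ k ≤ 8`, `k ≠ 4`: a form-preserving linear automorphism of the ambient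
rational quadratic space preserves `U ⊕ D_k` if and only if it preserves `U ⊕ ⟨1⟩^k`;
i.e. every isometry of `U ⊕ D_k` extends (via its unique `ℚ`-linear extension) to an
isometry of `U ⊕ ⟨1⟩^k`, and the restriction map `O(U ⊕ ⟨1⟩^k) → O(U ⊕ D_k)` is an
isomorphism of groups. -/
theorem stmt9 (k : ℕ) (hk1 : 1 ≤ k) (hk8 : k ≤ 8) (hk4 : k ≠ 4)
    (f : (Fin (k+2) → ℚ) ≃ₗ[ℚ] (Fin (k+2) → ℚ))
    (hf : ∀ x y, B9 k (f x) (f y) = B9 k x y) :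
    ⇑f '' L2 k = L2 k ↔ ⇑f '' L1 k = L1 k :=
  stmt9_general k hk8 hk4 f hf
end

section
/- Let N_8 be the lattice generated by vectors a1,...,a8 with (a_i,a_j) = 2δ_ij together with h = (a1 + ... + a8)/2, and let D_8 = {x ∈ ℤ^8 : x_1 + ... + x_8 even} with the standard Euclidean form. Then N_8 is an even positive definite lattice of rank 8 and determinant 2^6, and N_8 is isometric to D_8*(2), the dual lattice of D_8 equipped with the Euclidean form multiplied by 2. -/
/-- The Euclidean pairing on `ℚ^8`. -/
def dot8 (x y : Fin 8 → ℚ) : ℚ := ∑ i, x i * y i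

/-- The generators `a_i` of `N₈`: with the form `(x,y) = 2·dot₈ x y`, the `a_i` are
the standard basis vectors, so `(a_i, a_j) = 2δ_ij`. -/
def av (i : Fin 8) : Fin 8 → ℚ := fun j => if j = i then 1 else 0

/-- `h = (a1 + … + a8)/2`. -/
def hv : Fin 8 → ℚ := fun _ => 1/2

/-- Nikulin's lattice `N₈ ⊂ ℚ^8`: the `ℤ`-span of `a1, …, a8` and `h`. -/
def N8 : Set (Fin 8 → ℚ) :=
  (Submodule.span ℤ (Set.range av ∪ {hv}) : Submodule ℤ (Fin 8 → ℚ))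

/-- `D₈ ⊂ ℚ^8` with the standard Euclidean form: integer vectors with even sum. -/
def D8 : Set (Fin 8 → ℚ) :=
  {x | (∀ i, ∃ k : ℤ, x i = k) ∧ ∃ m : ℤ, ∑ i, x i = 2 * m}

/-- The dual lattice `D₈* ⊂ ℚ^8` (with respect to the Euclidean form). -/
def D8dual : Set (Fin 8 → ℚ) := {x | ∀ v ∈ D8, ∃ k : ℤ, dot8 x v = k}

/-!
In the coordinates given by the `aᵢ`, `N₈ = ℤ⁸ + ℤh` is the set of vectors whose coordinates
are either all integers or all in `½ + ℤ`. Pairing with the vectors `e₁ + eᵢ ∈ D₈` shows that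
every `x ∈ D₈*` has `2x₁ ∈ ℤ` and `x₁ + xᵢ ∈ ℤ`, so `D₈*` is exactly this set and the identity
of `ℚ⁸` is an isometry `N₈ ≅ D₈*(2)`. For `x = c + m h` one has `x·x = c·c + m Σ cᵢ + 2m²`,
whence evenness. Replacing `a₈` by `h` gives a basis with triangular coordinate matrix of
determinant `½`, so the Gram determinant is `2⁸ · (½)² = 2⁶`.
-/

open Matrix

lemma mem_N8_iff {x : Fin 8 → ℚ} :
    x ∈ N8 ↔ ∃ (c : Fin 8 → ℤ) (m : ℤ), ∀ i, x i = c i + m / 2 := by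
  simp only [N8, SetLike.mem_coe, Submodule.span_union, Submodule.mem_sup,
    Submodule.mem_span_range_iff_exists_fun, Submodule.mem_span_singleton]
  have hcoord (c : Fin 8 → ℤ) (m : ℤ) (i : Fin 8) :
      (∑ j, c j • av j + m • hv) i = c i + m / 2 := by
    simp [av, hv, div_eq_mul_inv]
  constructor
  · rintro ⟨_, ⟨c, rfl⟩, _, ⟨m, rfl⟩, rfl⟩
    exact ⟨c, m, hcoord c m⟩
  · rintro ⟨c, m, hx⟩
    exact ⟨_, ⟨c, rfl⟩, _, ⟨m, rfl⟩, funext fun i => (hcoord c m i).trans (hx i).symm⟩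

lemma dot8_self_eq_int_of_mem_N8 {v : Fin 8 → ℚ} (hv : v ∈ N8) : ∃ n : ℤ, dot8 v v = n := by
  obtain ⟨c, m, hc⟩ := mem_N8_iff.1 hv
  refine ⟨∑ i, c i ^ 2 + m * ∑ i, c i + 2 * m ^ 2, ?_⟩
  simp only [dot8, Fin.sum_univ_eight, hc]
  push_cast
  ring

lemma dot8_self_pos {v : Fin 8 → ℚ} (hv : v ≠ 0) : 0 < dot8 v v :=
  lt_of_le_of_ne (Finset.sum_nonneg fun i _ => mul_self_nonneg (v i))
    (Ne.symm (dotProduct_self_eq_zero.not.2 hv))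

lemma single_add_single_mem_D8 (i j : Fin 8) :
    (Pi.single i 1 + Pi.single j 1 : Fin 8 → ℚ) ∈ D8 := by
  refine ⟨fun k => ⟨(Pi.single i 1 + Pi.single j 1 : Fin 8 → ℤ) k, ?_⟩, 1, ?_⟩
  · simp [Pi.single_apply]
  · norm_num [Finset.sum_add_distrib]

lemma N8_eq_D8dual : N8 = D8dual := by
  ext x
  constructor
  · intro hx
    obtain ⟨c, m, hc⟩ := mem_N8_iff.1 hx
    rintro w ⟨hw, t, hsum⟩
    choose k hk using hw
    refine ⟨∑ i, c i * k i + m * t, ?_⟩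
    simp only [Fin.sum_univ_eight, hk] at hsum
    simp only [dot8, Fin.sum_univ_eight, hc, hk]
    push_cast
    linear_combination ((m : ℚ) / 2) * hsum
  · intro hx
    choose k hk using fun i => hx _ (single_add_single_mem_D8 0 i)
    have hpair (i : Fin 8) : x 0 + x i = k i := by
      simpa using (dotProduct_add x (Pi.single 0 1) (Pi.single i 1)).symm.trans (hk i)
    refine mem_N8_iff.2 ⟨fun i => k i - k 0, k 0, fun i => ?_⟩
    push_cast
    linarith [hpair 0, hpair i]

lemma det_of_mul_dotProduct {n R : Type*} [Fintype n] [DecidableEq n] [CommRing R]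
    (c : R) (b : n → n → R) :
    det (of fun i j => c * (b i ⬝ᵥ b j)) = c ^ Fintype.card n * det (of b) ^ 2 := by
  have hgram : of (fun i j => c * (b i ⬝ᵥ b j)) = c • (of b * (of b)ᵀ) := by
    ext i j
    simp [mul_apply, dotProduct]
  rw [hgram, det_smul, det_mul, det_transpose, sq]

def nikulinBasis : Fin 8 → Fin 8 → ℚ := Function.update av 7 hv

lemma av_seven : av 7 = (2 : ℤ) • nikulinBasis 7 - ∑ i : Fin 7, nikulinBasis i.castSucc := by
  funext j
  fin_cases j <;> simp [nikulinBasis, av, hv, Fin.sum_univ_seven, Function.update_apply]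

lemma span_nikulinBasis :
    Submodule.span ℤ (Set.range nikulinBasis) = Submodule.span ℤ (Set.range av ∪ {hv}) := by
  apply le_antisymm <;> rw [Submodule.span_le]
  · rintro _ ⟨i, rfl⟩
    rcases eq_or_ne i 7 with rfl | hi
    · exact Submodule.subset_span (Or.inr (by simp [nikulinBasis]))
    · exact Submodule.subset_span (Or.inl ⟨i, (Function.update_of_ne hi _ _).symm⟩)
  · have hmem (i : Fin 8) : nikulinBasis i ∈ Submodule.span ℤ (Set.range nikulinBasis) :=
      Submodule.subset_span ⟨i, rfl⟩
    rintro _ (⟨i, rfl⟩ | rfl)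
    · rcases eq_or_ne i 7 with rfl | hi
      · rw [SetLike.mem_coe, av_seven]
        exact Submodule.sub_mem _ (Submodule.smul_mem _ _ (hmem 7))
          (Submodule.sum_mem _ fun i _ => hmem _)
      · simpa [nikulinBasis, hi] using hmem i
    · simpa [nikulinBasis] using hmem 7

lemma det_nikulinBasis : det (of nikulinBasis) = 1 / 2 := by
  rw [det_of_isLowerTriangular]
  · simp [Fin.prod_univ_eight, nikulinBasis, av, hv, Function.update_apply]
  · intro i j (hij : i < j)
    have hi : i ≠ 7 := by rintro rfl; exact absurd hij (by simp [Fin.lt_def]; omega)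
    simp [nikulinBasis, av, hi, hij.ne']

/-- `N₈` (with the form `2·dot₈`) is an even positive definite lattice of rank 8 and
determinant `2^6 = 64`, and it is isometric to `D₈*(2)`, i.e. `D₈*` with the Euclidean
form multiplied by `2`. -/
theorem stmt10 :
    (∀ v ∈ N8, ∃ n : ℤ, 2 * dot8 v v = 2 * n) ∧
    (∀ v ∈ N8, v ≠ 0 → 0 < 2 * dot8 v v) ∧
    (∃ b : Fin 8 → (Fin 8 → ℚ),
      (Submodule.span ℤ (Set.range b) : Set (Fin 8 → ℚ)) = N8 ∧
      Matrix.det (Matrix.of fun i j => 2 * dot8 (b i) (b j)) = 64) ∧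
    (∃ f : (Fin 8 → ℚ) ≃ₗ[ℚ] (Fin 8 → ℚ),
      ⇑f '' N8 = D8dual ∧ ∀ x y, 2 * dot8 (f x) (f y) = 2 * dot8 x y) := by
  refine ⟨fun v hv => (dot8_self_eq_int_of_mem_N8 hv).imp fun n hn => by rw [hn],
    fun v _ hv => by linarith [dot8_self_pos hv],
    ⟨nikulinBasis, by rw [span_nikulinBasis, N8], ?_⟩,
    ⟨LinearEquiv.refl ℚ _, (Set.image_id N8).trans N8_eq_D8dual, fun _ _ => rfl⟩⟩
  exact (det_of_mul_dotProduct 2 nikulinBasis).trans (by rw [det_nikulinBasis]; norm_num)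
end

section
/- Let D_4 = {x ∈ ℤ^4 : x_1 + x_2 + x_3 + x_4 even} with the standard Euclidean form, so its dual lattice is D_4* = ℤ^4 + ℤ·(1/2,1/2,1/2,1/2). The value (y,y) mod 4 is well defined on the quotient group D_4*/2D_4, which has 64 elements, and the numbers of classes with (y,y) ≡ 0, 1, 2, 3 mod 4 are 4, 24, 12, 24 respectively. (Equivalently: the discriminant group of D_4(2) has exactly 4, 24, 12, 24 elements of norm 0, 1/2, 1, 3/2 modulo 2ℤ.) -/
/-- The Euclidean pairing on `ℚ^4`. -/
def dot4 (x y : Fin 4 → ℚ) : ℚ := ∑ i, x i * y i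

/-- `D₄ ⊂ ℚ^4` with the standard Euclidean form: integer vectors with even sum. -/
def D4s : Set (Fin 4 → ℚ) :=
  {x | (∀ i, ∃ k : ℤ, x i = k) ∧ ∃ m : ℤ, ∑ i, x i = 2 * m}

/-- The dual lattice `D₄* ⊂ ℚ^4`. -/
def D4dual : Set (Fin 4 → ℚ) := {x | ∀ v ∈ D4s, ∃ k : ℤ, dot4 x v = k}

/-- The sublattice `2D₄`. -/
def twoD4 : Set (Fin 4 → ℚ) := {x | ∃ w ∈ D4s, x = (2 : ℚ) • w}

/-- The coset relation on `D₄*` modulo `2D₄` (whose quotient is `D₄*/2D₄`). -/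
def r12 (x y : D4dual) : Prop := (x : Fin 4 → ℚ) - (y : Fin 4 → ℚ) ∈ twoD4

/-!
Doubling identifies `D₄*` with the integer vectors `u` whose coordinates all have the same parity,
and `2D₄` with `4D₄`. Hence the class of `u` modulo `4D₄` is determined by `u mod 4` together with
`∑ uᵢ mod 8`, and these pairs are exactly 64 explicit elements of `(ℤ/4)⁴ × ℤ/8`, each with a
canonical representative. Since `(y + 2w, y + 2w) = (y, y) + 4(y, w) + 4(w, w)` with `(y, w)` and
`(w, w)` integral, `(y, y) = |u|²/4` is well defined modulo 4, so on each class it is read off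
`|u|² mod 16` of the representative, and the counts become a finite computation.
-/

open Finset Matrix

namespace D4Lattice

lemma dot4_eq_dotProduct (x y : Fin 4 → ℚ) : dot4 x y = x ⬝ᵥ y := rfl

def halfVec (u : Fin 4 → ℤ) : Fin 4 → ℚ := fun i => (u i : ℚ) / 2

def SameParity (u : Fin 4 → ℤ) : Prop := ∀ i, u i ≡ u 0 [ZMOD 2]

lemma single_two_mem_D4s (i : Fin 4) : Pi.single i 2 ∈ D4s := by
  refine ⟨fun j => ⟨if j = i then 2 else 0, ?_⟩, 1, ?_⟩
  · by_cases h : j = i <;> simp [h]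
  · simp

lemma single_zero_add_single_mem_D4s {i : Fin 4} (hi : i ≠ 0) :
    Pi.single 0 1 + Pi.single i 1 ∈ D4s := by
  refine ⟨fun j => ⟨if j = 0 ∨ j = i then 1 else 0, ?_⟩, 1, ?_⟩
  · by_cases h0 : j = 0 <;> by_cases hi' : j = i <;> simp_all
  · simp [Finset.sum_add_distrib]
    norm_num

lemma halfVec_mem_D4dual {u : Fin 4 → ℤ} (hu : SameParity u) : halfVec u ∈ D4dual := by
  rintro v ⟨hint, m, hm⟩
  choose n hn using hint
  choose t ht using fun i => (hu i).symm.dvd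
  refine ⟨u 0 * m + ∑ i, t i * n i, ?_⟩
  have hu' : ∀ i, (u i : ℚ) = u 0 + 2 * t i := fun i => by
    have := congrArg (Int.cast : ℤ → ℚ) (ht i)
    push_cast at this
    linarith
  simp only [dot4, halfVec, Fin.sum_univ_four, hn] at hm ⊢
  push_cast
  linear_combination (u 0 : ℚ) / 2 * hm + (n 0 : ℚ) / 2 * hu' 0 + (n 1 : ℚ) / 2 * hu' 1
    + (n 2 : ℚ) / 2 * hu' 2 + (n 3 : ℚ) / 2 * hu' 3

lemma mem_D4dual_iff {x : Fin 4 → ℚ} : x ∈ D4dual ↔ ∃ u, SameParity u ∧ halfVec u = x := by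
  refine ⟨fun hx => ?_, fun ⟨u, hu, hux⟩ => hux ▸ halfVec_mem_D4dual hu⟩
  choose a ha using fun i => hx _ (single_two_mem_D4s i)
  have hxa : halfVec a = x := funext fun i => by
    have := ha i
    simp only [dot4_eq_dotProduct, dotProduct_single] at this
    simp only [halfVec, ← this]
    ring
  refine ⟨a, fun i => ?_, hxa⟩
  rcases eq_or_ne i 0 with rfl | hi
  · rfl
  obtain ⟨b, hb⟩ := hx _ (single_zero_add_single_mem_D4s hi)
  simp only [dot4_eq_dotProduct, dotProduct_add, dotProduct_single, ← hxa, halfVec] at hb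
  have hab : a 0 + a i = 2 * b := by exact_mod_cast (by linarith : (a 0 + a i : ℚ) = 2 * b)
  unfold Int.ModEq
  omega

lemma D4dual_eq : D4dual =
    {x : Fin 4 → ℚ | (∀ i, ∃ k : ℤ, x i = (k : ℚ)) ∨ (∀ i, ∃ k : ℤ, x i = (k : ℚ) + 1/2)} := by
  ext x
  rw [mem_D4dual_iff, Set.mem_ofPred_eq]
  constructor
  · rintro ⟨u, hu, rfl⟩
    have hu : ∀ i, u i % 2 = u 0 % 2 := hu
    rcases Int.emod_two_eq_zero_or_one (u 0) with h0 | h1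
    · refine .inl fun i => ?_
      obtain ⟨k, hk⟩ : ∃ k, u i = 2 * k := ⟨u i / 2, by have := hu i; omega⟩
      exact ⟨k, by rw [halfVec, hk]; push_cast; ring⟩
    · refine .inr fun i => ?_
      obtain ⟨k, hk⟩ : ∃ k, u i = 2 * k + 1 := ⟨u i / 2, by have := hu i; omega⟩
      exact ⟨k, by rw [halfVec, hk]; push_cast; ring⟩
  · rintro (h | h) <;> choose k hk using h
    · refine ⟨2 * k, fun i => ?_, funext fun i => ?_⟩
      · simp [Int.ModEq]
      · simp [halfVec, hk]
    · refine ⟨2 * k + 1, fun i => ?_, funext fun i => ?_⟩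
      · simp [Int.ModEq, Int.add_emod]
      · simp [halfVec, hk]
        ring

lemma exists_dot4_sub_dot4_eq_four_mul {x y : Fin 4 → ℚ} (hy : y ∈ D4dual)
    (hxy : x - y ∈ twoD4) : ∃ m : ℤ, dot4 x x - dot4 y y = 4 * m := by
  obtain ⟨w, hw, hxyw⟩ := hxy
  obtain ⟨k, hk⟩ := hy w hw
  choose n hn using hw.1
  have hww : dot4 w w = ((∑ i, n i ^ 2 : ℤ) : ℚ) := by
    push_cast
    simp only [dot4, hn, sq]
  rw [sub_eq_iff_eq_add] at hxyw
  refine ⟨k + ∑ i, n i ^ 2, ?_⟩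
  simp only [dot4_eq_dotProduct, hxyw] at hk hww ⊢
  simp only [add_dotProduct, dotProduct_add, smul_dotProduct, dotProduct_smul,
    dotProduct_comm w y, smul_eq_mul]
  rw [Int.cast_add]
  linear_combination 4 * hk + 4 * hww

lemma dot4_halfVec (u : Fin 4 → ℤ) :
    dot4 (halfVec u) (halfVec u) = ((∑ i, u i ^ 2 : ℤ) : ℚ) / 4 := by
  simp only [dot4, halfVec, Int.cast_sum, Int.cast_pow, Finset.sum_div]
  exact Finset.sum_congr rfl fun i _ => by ring

abbrev D4Key := (Fin 4 → ZMod 4) × ZMod 8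

def key (u : Fin 4 → ℤ) : D4Key := (fun i => (u i : ZMod 4), ((∑ i, u i : ℤ) : ZMod 8))

lemma key_eq_key_iff (u v : Fin 4 → ℤ) :
    key u = key v ↔ (∀ i, u i ≡ v i [ZMOD 4]) ∧ ∑ i, u i ≡ ∑ i, v i [ZMOD 8] := by
  simp only [key, Prod.ext_iff, funext_iff, ZMod.intCast_eq_intCast_iff, Nat.cast_ofNat]

lemma halfVec_sub_mem_twoD4_iff (u v : Fin 4 → ℤ) :
    halfVec u - halfVec v ∈ twoD4 ↔ key u = key v := by
  simp only [key_eq_key_iff, Int.ModEq, Fin.sum_univ_four]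
  constructor
  · rintro ⟨w, ⟨hint, m, hm⟩, huv⟩
    choose n hn using hint
    have h4 : ∀ i, u i - v i = 4 * n i := fun i => by
      have := congrFun huv i
      simp only [halfVec, Pi.sub_apply, Pi.smul_apply, smul_eq_mul, hn] at this
      exact_mod_cast (by linarith : (u i - v i : ℚ) = 4 * n i)
    have h2 : n 0 + n 1 + n 2 + n 3 = 2 * m := by
      simp only [Fin.sum_univ_four, hn] at hm
      exact_mod_cast hm
    refine ⟨fun i => by have := h4 i; omega, ?_⟩
    have := h4 0; have := h4 1; have := h4 2; have := h4 3
    omega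
  · rintro ⟨h4, h8⟩
    have : ∀ i, ∃ n, u i - v i = 4 * n := fun i => ⟨(u i - v i) / 4, by have := h4 i; omega⟩
    choose n hn using this
    have hsum : n 0 + n 1 + n 2 + n 3 = 2 * ((n 0 + n 1 + n 2 + n 3) / 2) := by
      have := hn 0; have := hn 1; have := hn 2; have := hn 3
      omega
    refine ⟨fun i => n i, ⟨fun i => ⟨n i, rfl⟩, (n 0 + n 1 + n 2 + n 3) / 2, ?_⟩,
      funext fun i => ?_⟩
    · simp only [Fin.sum_univ_four]
      exact_mod_cast hsum
    · have : (u i - v i : ℚ) = 4 * n i := by exact_mod_cast hn i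
      simp only [halfVec, Pi.sub_apply, Pi.smul_apply, smul_eq_mul]
      linarith

def IsAdmissibleKey (p : D4Key) : Prop :=
  (∀ i, (p.1 i).val % 2 = (p.1 0).val % 2) ∧ p.2.val % 4 = (∑ i, (p.1 i).val) % 4

instance : DecidablePred IsAdmissibleKey := fun _ => inferInstanceAs (Decidable (_ ∧ _))

def keyCorrection (p : D4Key) : ℤ := (p.2.val - ∑ i, ((p.1 i).val : ℤ)) % 8

/-- Lifts the coordinates of `p` to `{0, 1, 2, 3}`, then moves the first one by a multiple of 4
(for admissible `p`) to give the coordinate sum the residue `p.2`. -/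
def keyRep (p : D4Key) : Fin 4 → ℤ :=
  fun i => (p.1 i).val + if i = 0 then keyCorrection p else 0

lemma keyCorrection_emod_four {p : D4Key} (hp : IsAdmissibleKey p) :
    keyCorrection p % 4 = 0 := by
  have := hp.2
  simp only [keyCorrection, Fin.sum_univ_four] at this ⊢
  omega

lemma sum_keyRep (p : D4Key) :
    ∑ i, keyRep p i = ∑ i, ((p.1 i).val : ℤ) + keyCorrection p := by
  simp [keyRep, Finset.sum_add_distrib]

lemma key_keyRep {p : D4Key} (hp : IsAdmissibleKey p) : key (keyRep p) = p := by
  have h4 := keyCorrection_emod_four hp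
  refine Prod.ext (funext fun i => (ZMod.intCast_eq_iff _ _ _).2 ?_)
    ((ZMod.intCast_eq_iff _ _ _).2 ?_)
  · refine ⟨if i = 0 then keyCorrection p / 4 else 0, ?_⟩
    by_cases hi : i = 0 <;> simp only [keyRep, hi, if_true, if_false, add_zero] <;> omega
  · refine ⟨(∑ i, ((p.1 i).val : ℤ) + keyCorrection p - p.2.val) / 8, ?_⟩
    have := ZMod.val_lt p.2
    rw [sum_keyRep]
    simp only [keyCorrection, Fin.sum_univ_four] at h4 ⊢
    omega

lemma sameParity_keyRep {p : D4Key} (hp : IsAdmissibleKey p) : SameParity (keyRep p) := by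
  intro i
  have h4 := keyCorrection_emod_four hp
  have := hp.1 i
  unfold Int.ModEq
  rcases eq_or_ne i 0 with rfl | hi
  · rfl
  simp only [keyRep, hi, if_true, if_false, add_zero]
  omega

lemma isAdmissibleKey_key {u : Fin 4 → ℤ} (hu : SameParity u) : IsAdmissibleKey (key u) := by
  have hval4 := fun i => ZMod.val_intCast (n := 4) (u i)
  have hval8 := ZMod.val_intCast (n := 8) (∑ i, u i)
  refine ⟨fun i => ?_, ?_⟩
  · have := hval4 i; have := hval4 0; have := hu i
    unfold Int.ModEq at *
    simp only [key]
    omega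
  · have := hval4 0; have := hval4 1; have := hval4 2; have := hval4 3
    simp only [key, Fin.sum_univ_four] at *
    omega

def keyNormSq (p : D4Key) : ZMod 16 := ((∑ i, keyRep p i ^ 2 : ℤ) : ZMod 16)

lemma keyNormSq_key {u : Fin 4 → ℤ} (hu : SameParity u) :
    keyNormSq (key u) = ((∑ i, u i ^ 2 : ℤ) : ZMod 16) := by
  have hrel : halfVec (keyRep (key u)) - halfVec u ∈ twoD4 := by
    rw [halfVec_sub_mem_twoD4_iff, key_keyRep (isAdmissibleKey_key hu)]
  obtain ⟨m, hm⟩ := exists_dot4_sub_dot4_eq_four_mul (halfVec_mem_D4dual hu) hrel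
  rw [dot4_halfVec, dot4_halfVec] at hm
  rw [keyNormSq, ZMod.intCast_eq_intCast_iff_dvd_sub]
  refine ⟨-m, ?_⟩
  qify
  push_cast at hm ⊢
  linarith

lemma intCast_eq_intCast_four_mul_iff (s c : ℤ) :
    (s : ZMod 16) = ((4 * c : ℤ) : ZMod 16) ↔ ∃ m : ℤ, (s : ℚ) / 4 = 4 * m + c := by
  rw [ZMod.intCast_eq_intCast_iff_dvd_sub]
  constructor
  · rintro ⟨m, hm⟩
    refine ⟨-m, ?_⟩
    qify at hm
    push_cast
    linarith
  · rintro ⟨m, hm⟩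
    refine ⟨-m, ?_⟩
    qify
    linarith

def coords (x : Fin 4 → ℚ) : Fin 4 → ℤ := fun i => ⌊2 * x i⌋

lemma coords_halfVec (u : Fin 4 → ℤ) : coords (halfVec u) = u :=
  funext fun i => by simp [coords, halfVec, mul_div_cancel₀]

lemma halfVec_coords {x : Fin 4 → ℚ} (hx : x ∈ D4dual) : halfVec (coords x) = x := by
  obtain ⟨u, -, rfl⟩ := mem_D4dual_iff.1 hx
  rw [coords_halfVec]

lemma sameParity_coords {x : Fin 4 → ℚ} (hx : x ∈ D4dual) : SameParity (coords x) := by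
  obtain ⟨u, hu, rfl⟩ := mem_D4dual_iff.1 hx
  rwa [coords_halfVec]

def dualKey (x : D4dual) : {p : D4Key // IsAdmissibleKey p} :=
  ⟨key (coords x), isAdmissibleKey_key (sameParity_coords x.2)⟩

lemma r12_iff_dualKey_eq (x y : D4dual) : r12 x y ↔ dualKey x = dualKey y := by
  rw [r12, ← halfVec_coords x.2, ← halfVec_coords y.2, halfVec_sub_mem_twoD4_iff,
    Subtype.ext_iff, dualKey, dualKey]

lemma dualKey_surjective : Function.Surjective dualKey := fun ⟨p, hp⟩ =>
  ⟨⟨halfVec (keyRep p), halfVec_mem_D4dual (sameParity_keyRep hp)⟩,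
    Subtype.ext (by simp only [dualKey, coords_halfVec, key_keyRep hp])⟩

noncomputable def quotEquiv : Quot r12 ≃ {p : D4Key // IsAdmissibleKey p} :=
  (Quot.congrRight r12_iff_dualKey_eq).trans
    (Setoid.quotientKerEquivOfSurjective _ dualKey_surjective)

lemma quotEquiv_mk (x : D4dual) : quotEquiv (Quot.mk r12 x) = dualKey x := rfl

lemma exists_mk_eq_and_dot4_iff (x : D4dual) (c : ℤ) :
    (∃ y : D4dual, Quot.mk r12 y = Quot.mk r12 x ∧ ∃ m : ℤ, dot4 y y = 4 * m + c) ↔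
      ∃ m : ℤ, dot4 x x = 4 * m + c := by
  refine ⟨fun ⟨y, hyx, m, hm⟩ => ?_, fun h => ⟨x, rfl, h⟩⟩
  have hr : r12 y x := by
    rw [r12_iff_dualKey_eq, ← quotEquiv_mk, ← quotEquiv_mk, hyx]
  obtain ⟨k, hk⟩ := exists_dot4_sub_dot4_eq_four_mul x.2 hr
  exact ⟨m - k, by push_cast; linarith⟩

lemma keyNormSq_dualKey_eq_iff (x : D4dual) (c : ℤ) :
    keyNormSq (dualKey x) = ((4 * c : ℤ) : ZMod 16) ↔ ∃ m : ℤ, dot4 x x = 4 * m + c := by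
  rw [dualKey, keyNormSq_key (sameParity_coords x.2), intCast_eq_intCast_four_mul_iff,
    ← dot4_halfVec, halfVec_coords x.2]

lemma card_normClass (c : ℤ) :
    Nat.card {q : Quot r12 // ∃ x : D4dual, Quot.mk r12 x = q ∧
      ∃ m : ℤ, dot4 x.1 x.1 = 4 * m + c} =
    Fintype.card {p : D4Key // IsAdmissibleKey p ∧ keyNormSq p = ((4 * c : ℤ) : ZMod 16)} := by
  rw [← Nat.card_eq_fintype_card]
  refine Nat.card_congr ((quotEquiv.subtypeEquiv fun q => ?_).trans
    (Equiv.subtypeSubtypeEquivSubtypeInter _ (keyNormSq · = ((4 * c : ℤ) : ZMod 16))))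
  induction q using Quot.ind with | mk x => ?_
  rw [exists_mk_eq_and_dot4_iff, quotEquiv_mk, keyNormSq_dualKey_eq_iff]

set_option maxRecDepth 100000 in
lemma card_admissibleKey : Fintype.card {p : D4Key // IsAdmissibleKey p} = 64 := by
  decide

set_option maxRecDepth 100000 in
lemma card_admissibleKey_keyNormSq :
    Fintype.card {p : D4Key // IsAdmissibleKey p ∧ keyNormSq p = 0} = 4 ∧
    Fintype.card {p : D4Key // IsAdmissibleKey p ∧ keyNormSq p = 4} = 24 ∧
    Fintype.card {p : D4Key // IsAdmissibleKey p ∧ keyNormSq p = 8} = 12 ∧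
    Fintype.card {p : D4Key // IsAdmissibleKey p ∧ keyNormSq p = 12} = 24 := by
  decide

end D4Lattice

open D4Lattice in
/-- `D₄* = ℤ^4 + ℤ·(1/2,1/2,1/2,1/2)`; the norm `(y,y)` is well defined modulo 4 on
`D₄*/2D₄`; this quotient has 64 elements, and the numbers of classes with
`(y,y) ≡ 0, 1, 2, 3 (mod 4)` are `4, 24, 12, 24` respectively. -/
theorem stmt12 :
    D4dual = {x : Fin 4 → ℚ | (∀ i, ∃ k : ℤ, x i = (k : ℚ)) ∨ (∀ i, ∃ k : ℤ, x i = (k : ℚ) + 1/2)} ∧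
    (∀ x ∈ D4dual, ∀ y ∈ D4dual, x - y ∈ twoD4 →
      ∃ m : ℤ, dot4 x x - dot4 y y = 4 * m) ∧
    Nat.card (Quot r12) = 64 ∧
    Nat.card {q : Quot r12 // ∃ x : D4dual, Quot.mk r12 x = q ∧
      ∃ m : ℤ, dot4 x.1 x.1 = 4 * m} = 4 ∧
    Nat.card {q : Quot r12 // ∃ x : D4dual, Quot.mk r12 x = q ∧
      ∃ m : ℤ, dot4 x.1 x.1 = 4 * m + 1} = 24 ∧
    Nat.card {q : Quot r12 // ∃ x : D4dual, Quot.mk r12 x = q ∧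
      ∃ m : ℤ, dot4 x.1 x.1 = 4 * m + 2} = 12 ∧
    Nat.card {q : Quot r12 // ∃ x : D4dual, Quot.mk r12 x = q ∧
      ∃ m : ℤ, dot4 x.1 x.1 = 4 * m + 3} = 24 := by
  obtain ⟨h0, h4, h8, h12⟩ := card_admissibleKey_keyNormSq
  refine ⟨D4dual_eq, fun x _ y hy => exists_dot4_sub_dot4_eq_four_mul hy, ?_, ?_, ?_, ?_, ?_⟩
  · rw [Nat.card_congr quotEquiv, Nat.card_eq_fintype_card, card_admissibleKey]
  · simpa using (card_normClass 0).trans (by norm_num [h0] : _ = 4)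
  · simpa using (card_normClass 1).trans (by norm_num [h4] : _ = 24)
  · simpa using (card_normClass 2).trans (by norm_num [h8] : _ = 12)
  · simpa using (card_normClass 3).trans (by norm_num [h12] : _ = 24)
end

section
/- Let S be the rank-3 lattice with basis a, b, c and Gram matrix [[2,0,-1],[0,2,-2],[-1,-2,2]] (the lattice U ⊕ A_1), and consider the vectors P = {2a+3b+6c, a+6b+9c, 5b+6c, b, a} (all lying in the sublattice M_{1,1,3} = [a,b,3c]). Then every element of P has square 2, the Gram matrix of P (in this order) equals [[2,-2,-6,-6,-2],[-2,2,0,-6,-7],[-6,0,2,-2,-6],[-6,-6,-2,2,0],[-2,-7,-6,0,2]], and the vector ρ = (1/3)a + (7/6)b + (5/3)c satisfies (ρ, δ) = -1 for every δ ∈ P and (ρ,ρ) = -7/18. -/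
/-- The Gram matrix of `U ⊕ A₁` in the basis `a, b, c`. -/
def G17 : Matrix (Fin 3) (Fin 3) ℚ := !![2, 0, -1; 0, 2, -2; -1, -2, 2]

/-- `P = (2a+3b+6c, a+6b+9c, 5b+6c, b, a)` in the coordinates of the basis `a, b, c`. -/
def P17 : Fin 5 → (Fin 3 → ℚ) :=
  ![![2, 3, 6], ![1, 6, 9], ![0, 5, 6], ![0, 1, 0], ![1, 0, 0]]

/-- The generalized Cartan matrix `A_{1,III}`. -/
def A17 : Matrix (Fin 5) (Fin 5) ℚ :=
  !![2, -2, -6, -6, -2;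
     -2, 2, 0, -6, -7;
     -6, 0, 2, -2, -6;
     -6, -6, -2, 2, 0;
     -2, -7, -6, 0, 2]

/-- `ρ = (1/3)a + (7/6)b + (5/3)c`. -/
def rho17 : Fin 3 → ℚ := ![1/3, 7/6, 5/3]

/-- Coordinates of `P17` in the basis `a, b, 3c` of `M_{1,1,3}`. -/
def P17M : Fin 5 → (Fin 3 → ℤ) :=
  ![![2, 3, 2], ![1, 6, 3], ![0, 5, 2], ![0, 1, 0], ![1, 0, 0]]

lemma P17_eq_P17M (i : Fin 5) :
    P17 i = ![(P17M i 0 : ℚ), P17M i 1, 3 * P17M i 2] := by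
  fin_cases i <;> ext k <;> fin_cases k <;> norm_num [P17, P17M, Matrix.cons_val_two]

lemma bil_fin_three (G : Matrix (Fin 3) (Fin 3) ℚ) (x y : Fin 3 → ℚ) :
    bil G x y =
      x 0 * G 0 0 * y 0 + x 0 * G 0 1 * y 1 + x 0 * G 0 2 * y 2 +
      (x 1 * G 1 0 * y 0 + x 1 * G 1 1 * y 1 + x 1 * G 1 2 * y 2) +
      (x 2 * G 2 0 * y 0 + x 2 * G 2 1 * y 1 + x 2 * G 2 2 * y 2) := by
  simp only [bil, Fin.sum_univ_three]

lemma bil_P17_P17 (i j : Fin 5) : bil G17 (P17 i) (P17 j) = A17 i j := by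
  fin_cases i <;> fin_cases j <;>
    norm_num [bil_fin_three, Matrix.cons_val_two, G17, P17, A17]

lemma bil_rho17_P17 (i : Fin 5) : bil G17 rho17 (P17 i) = -1 := by
  fin_cases i <;> norm_num [bil_fin_three, Matrix.cons_val_two, G17, P17, rho17]

lemma bil_rho17_rho17 : bil G17 rho17 rho17 = -7/18 := by
  norm_num [bil_fin_three, Matrix.cons_val_two, G17, rho17]

theorem stmt17 :
    (∀ i, (∃ k : ℤ, P17 i 0 = (k : ℚ)) ∧ (∃ k : ℤ, P17 i 1 = (k : ℚ)) ∧
      (∃ k : ℤ, P17 i 2 = 3 * (k : ℚ))) ∧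
    (∀ i, bil G17 (P17 i) (P17 i) = 2) ∧
    (∀ i j, bil G17 (P17 i) (P17 j) = A17 i j) ∧
    (∀ i, bil G17 rho17 (P17 i) = -1) ∧
    bil G17 rho17 rho17 = -7/18 := by
  refine ⟨fun i => ?_, fun i => ?_, bil_P17_P17, bil_rho17_P17, bil_rho17_rho17⟩
  · rw [P17_eq_P17M]
    exact ⟨⟨_, rfl⟩, ⟨_, rfl⟩, ⟨_, rfl⟩⟩
  · rw [bil_P17_P17]
    fin_cases i <;> rfl
end

section
/- Let S = U(4) ⊕ D_4 be the even hyperbolic lattice of rank 6 with basis c1, c2, e1, e2, e3, e4 where (c1,c1) = (c2,c2) = 0, (c1,c2) = -4, and e1,...,e4 are orthogonal to c1, c2 with the D_4 Cartan Gram matrix ((e_i,e_i) = 2 for all i, (e_i,e4) = -1 for i = 1,2,3, (e_i,e_j) = 0 for distinct i,j ∈ {1,2,3}); set w = e1 + e2 + e3 + 2e4. Let P consist of the 9 vectors e1, e2, e3, e4, c1 - w, c2 - w, and c1 + c2 - 2e1 - 2e2 - 2e3 - 4e4 - e_i for i = 1, 2, 3. Then every element of P has square 2, and the vector ρ = (3/2)c1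 + (3/2)c2 - 3e1 - 3e2 - 3e3 - 5e4 ∈ S ⊗ ℚ satisfies (ρ, δ) = -1 for every δ ∈ P. -/
/-- The Gram matrix of `S = U(4) ⊕ D₄` in the basis `c1, c2, e1, e2, e3, e4`. -/
def G19 : Matrix (Fin 6) (Fin 6) ℚ :=
  !![0, -4, 0, 0, 0, 0;
     -4, 0, 0, 0, 0, 0;
     0, 0, 2, 0, 0, -1;
     0, 0, 0, 2, 0, -1;
     0, 0, 0, 0, 2, -1;
     0, 0, -1, -1, -1, 2]

/-- The 9 vectors of `P`: `e1, e2, e3, e4`, `c1 - w`, `c2 - w`, and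
`c1 + c2 - 2e1 - 2e2 - 2e3 - 4e4 - e_i` for `i = 1, 2, 3`, where `w = e1+e2+e3+2e4`. -/
def P19 : Fin 9 → (Fin 6 → ℚ) :=
  ![![0, 0, 1, 0, 0, 0], ![0, 0, 0, 1, 0, 0], ![0, 0, 0, 0, 1, 0], ![0, 0, 0, 0, 0, 1],
    ![1, 0, -1, -1, -1, -2], ![0, 1, -1, -1, -1, -2],
    ![1, 1, -3, -2, -2, -4], ![1, 1, -2, -3, -2, -4], ![1, 1, -2, -2, -3, -4]]

/-- `ρ = (3/2)c1 + (3/2)c2 - 3e1 - 3e2 - 3e3 - 5e4`. -/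
def rho19 : Fin 6 → ℚ := ![3/2, 3/2, -3, -3, -3, -5]

theorem bil_G19_self (x : Fin 6 → ℚ) :
    bil G19 x x = -8 * x 0 * x 1 + 2 * (x 2 ^ 2 + x 3 ^ 2 + x 4 ^ 2 + x 5 ^ 2)
      - 2 * x 5 * (x 2 + x 3 + x 4) := by
  simp [bil, G19, Fin.sum_univ_six]
  ring

theorem bil_G19_rho19 (x : Fin 6 → ℚ) :
    bil G19 rho19 x = -6 * x 0 - 6 * x 1 - x 2 - x 3 - x 4 - x 5 := by
  simp [bil, G19, rho19, Fin.sum_univ_six]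
  ring

theorem stmt19 :
    (∀ i, bil G19 (P19 i) (P19 i) = 2) ∧
    (∀ i, bil G19 rho19 (P19 i) = -1) := by
  refine ⟨fun i => ?_, fun i => ?_⟩
  · rw [bil_G19_self]
    fin_cases i <;> simp [P19] <;> norm_num
  · rw [bil_G19_rho19]
    fin_cases i <;> simp [P19] <;> norm_num
end
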